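/- arXiv:1204.2851 — 4 statements merged into one kernel-verified Lean document; each statement's English description precedes it below -/
import Mathlib

section
/- Let C be a preadditive category and let X, Y be objects of C such that both End(X) and End(Y) are isomorphic, as rings, to the dual numbers Z₂[ε]/(ε²) over the field Z₂ = ℤ/2ℤ. Suppose that the additive subgroup of End(Y) generated by all composites a ∘ b with b : Y → X and a : X → Y is all of End(Y). Then X and Y are isomorphic objects of C. -/
/-!
The dual numbers over a field form a local ring, so the nonunits of `End Y` form an additive
subgroup; hence some composite `b ≫ a` is invertible and `Y` is a retract `i, r` of `X`. The
idempotent `r ≫ i` of the local ring `End X` is `0` or `1`; it cannot be `0` because `End Y` is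
nontrivial, so `r` is an isomorphism.
-/

open CategoryTheory

namespace IsLocalRing

variable {R : Type*} [Ring R] [IsLocalRing R]

variable (R) in
def nonunitsAddSubgroup : AddSubgroup R where
  toAddSubmonoid := nonunitsAddSubmonoid R
  neg_mem' hx hneg := hx (by simpa using hneg.neg)

theorem exists_isUnit_of_closure_eq_top {s : Set R} (hs : AddSubgroup.closure s = ⊤) :
    ∃ x ∈ s, IsUnit x := by
  by_contra! h
  have hle : AddSubgroup.closure s ≤ nonunitsAddSubgroup R := (AddSubgroup.closure_le _).mpr h
  rw [hs, top_le_iff] at hle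
  have hone : (1 : R) ∈ nonunitsAddSubgroup R := hle ▸ AddSubgroup.mem_top 1
  exact hone isUnit_one

theorem isIdempotentElem_iff {e : R} : IsIdempotentElem e ↔ e = 0 ∨ e = 1 := by
  refine ⟨fun he => ?_, by rintro (rfl | rfl) <;> simp [IsIdempotentElem]⟩
  rcases isUnit_or_isUnit_of_add_one (add_sub_cancel e 1) with hu | hu
  · exact .inr ((IsIdempotentElem.iff_eq_one_of_isUnit hu).mp he)
  · exact .inl ((hu.mul_right_eq_zero).mp he.one_sub_mul_self)

end IsLocalRing

namespace CategoryTheory.Retract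

variable {C : Type*} [Category C]

noncomputable def ofIsIsoComp {X Y : C} (b : Y ⟶ X) (a : X ⟶ Y) [IsIso (b ≫ a)] :
    Retract Y X where
  i := b
  r := a ≫ inv (b ≫ a)
  retract := by rw [← Category.assoc, IsIso.hom_inv_id]

theorem isIso_r_of_isLocalRing [Preadditive C] {X Y : C} (h : Retract Y X)
    [IsLocalRing (End X)] [Nontrivial (End Y)] : IsIso h.r := by
  have hidem : IsIdempotentElem (show End X from h.r ≫ h.i) := by
    simp [IsIdempotentElem, End.mul_def]
  rcases IsLocalRing.isIdempotentElem_iff.mp hidem with hzero | hone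
  · refine absurd ?_ (one_ne_zero (α := End Y))
    calc (1 : End Y) = h.i ≫ (h.r ≫ h.i) ≫ h.r := by simp [End.one_def]
      _ = 0 := by rw [show h.r ≫ h.i = 0 from hzero]; simp
  · exact ⟨h.i, hone, h.retract⟩

end CategoryTheory.Retract

/-- In a preadditive category, if `End X` and `End Y` are both isomorphic as
rings to the dual numbers `ℤ/2[ε]/(ε²)`, and the additive subgroup of `End Y` generated by all
composites `a ∘ b` (with `b : Y ⟶ X`, `a : X ⟶ Y`) is all of `End Y`, then `X ≅ Y`. -/
theorem stmt1 {C : Type*} [Category C] [Preadditive C] (X Y : C)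
    (eX : End X ≃+* DualNumber (ZMod 2))
    (eY : End Y ≃+* DualNumber (ZMod 2))
    (hsurj : AddSubgroup.closure
        {f : End Y | ∃ (b : Y ⟶ X) (a : X ⟶ Y), f = b ≫ a} = ⊤) :
    Nonempty (X ≅ Y) := by
  have := eX.symm.isLocalRing
  have := eY.symm.isLocalRing
  obtain ⟨_, ⟨b, a, rfl⟩, hunit⟩ := IsLocalRing.exists_isUnit_of_closure_eq_top hsurj
  have : IsIso (b ≫ a) := (isUnit_iff_isIso _).mp hunit
  have := (Retract.ofIsIsoComp b a).isIso_r_of_isLocalRing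
  exact ⟨asIso (Retract.ofIsIsoComp b a).r⟩
end

section
/- Let R = Z₂[[t]] be the ring of formal power series over the field Z₂ with two elements. Let P and Q be R-modules on which multiplication by t is injective, equipped with R-linear endomorphisms d_P : P → P and d_Q : Q → Q satisfying d_P² = 0 and d_Q² = 0. Let f : P → Q be an R-linear map with f ∘ d_P = d_Q ∘ f, and suppose f induces an isomorphism ker d_P / im d_P → ker d_Q / im d_Q. Then the induced map f̄ : P/tP → Q/tQ, which intertwines the induced differentials d̄_P and d̄_Q, induces an isomorphism ker d̄_P / im d̄_P → ker d̄_Q / im d̄_Q. -/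
/-!
Reduction mod `t` is the cokernel of the injective map `t • ·`, so each complex sits in a short
exact sequence `0 → P → P → P/tP → 0` whose long exact homology sequence is 2-periodic.  The
connecting map sends the class of `x` with `d x = t • p` to the class of `p`, and the statement
is the five lemma for the map of these sequences induced by `f`, carried out element by element.
-/

section ReductionModScalar

variable {R M : Type*} [Ring R] [AddCommGroup M] [Module R M]

/-- The class of `x` in `M / t M` is a cycle. -/
def IsCycleMod (t : R) (d : M →ₗ[R] M) (x : M) : Prop :=
  ∃ p, d x = t • p

/-- The class of `x` in `M / t M` is a boundary. -/
def IsBoundaryMod (t : R) (d : M →ₗ[R] M) (x : M) : Prop :=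
  ∃ u v, x = d u + t • v

variable {t : R} {d : M →ₗ[R] M}

theorem d_d_apply (hd : d ∘ₗ d = 0) (x : M) : d (d x) = 0 :=
  LinearMap.congr_fun hd x

theorem d_eq_zero_of_d_eq_smul (ht : Function.Injective fun x : M => t • x) (hd : d ∘ₗ d = 0)
    {x p : M} (hx : d x = t • p) : d p = 0 :=
  ht <| by simp only [smul_zero, ← map_smul, ← hx, d_d_apply hd]

end ReductionModScalar

section ChainMap

variable {R P Q : Type*} [Ring R] [AddCommGroup P] [AddCommGroup Q] [Module R P] [Module R Q]
  {t : R} {dP : P →ₗ[R] P} {dQ : Q →ₗ[R] Q} {f : P →ₗ[R] Q}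

/-- The connecting map `[x] ↦ [p]` (where `dP x = t • p`) commutes with `f`. -/
theorem map_eq_d_of_d_eq_smul (htQ : Function.Injective fun y : Q => t • y)
    (hdQ : dQ ∘ₗ dQ = 0) (hf : f ∘ₗ dP = dQ ∘ₗ f) {x p : P} {u v : Q}
    (hx : dP x = t • p) (hfx : f x = dQ u + t • v) : f p = dQ v :=
  htQ <| by
    simp only [← map_smul, ← hx, ← LinearMap.comp_apply, hf]
    simp only [LinearMap.comp_apply, hfx, map_add, d_d_apply hdQ, zero_add]

theorem isBoundaryMod_of_isBoundaryMod_map (htP : Function.Injective fun x : P => t • x)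
    (htQ : Function.Injective fun y : Q => t • y) (hdP : dP ∘ₗ dP = 0) (hdQ : dQ ∘ₗ dQ = 0)
    (hf : f ∘ₗ dP = dQ ∘ₗ f)
    (hinj : ∀ x, dP x = 0 → f x ∈ LinearMap.range dQ → x ∈ LinearMap.range dP)
    (hsurj : ∀ y, dQ y = 0 → ∃ x, dP x = 0 ∧ y - f x ∈ LinearMap.range dQ)
    {x : P} (hx : IsCycleMod t dP x) (hfx : IsBoundaryMod t dQ (f x)) :
    IsBoundaryMod t dP x := by
  obtain ⟨p, hp⟩ := hx
  obtain ⟨u, v, huv⟩ := hfx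
  obtain ⟨w₁, hw₁⟩ := hinj p (d_eq_zero_of_d_eq_smul htP hdP hp)
    ⟨v, (map_eq_d_of_d_eq_smul htQ hdQ hf hp huv).symm⟩
  -- `x - t • w₁` is an honest cycle lifting `x`, with image `≡ dQ u` modulo `t`.
  have hx₁ : dP (x - t • w₁) = t • 0 := by rw [map_sub, map_smul, hw₁, hp, sub_self, smul_zero]
  have hfx₁ : f (x - t • w₁) = dQ u + t • (v - f w₁) := by
    rw [map_sub, map_smul, huv, smul_sub]; abel
  obtain ⟨x₂, hx₂, u₂, hu₂⟩ :=
    hsurj (v - f w₁) (by rw [← map_eq_d_of_d_eq_smul htQ hdQ hf hx₁ hfx₁, map_zero])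
  obtain ⟨w, hw⟩ : x - t • w₁ - t • x₂ ∈ LinearMap.range dP := by
    refine hinj _ (by rw [map_sub, map_smul, hx₂, hx₁, smul_zero, sub_zero]) ⟨u + t • u₂, ?_⟩
    rw [map_add, map_smul, hu₂, map_sub, hfx₁, map_smul, smul_sub]; abel
  exact ⟨w, x₂ + w₁, by rw [hw, smul_add]; abel⟩

theorem exists_isCycleMod_isBoundaryMod_sub_map (htQ : Function.Injective fun y : Q => t • y)
    (hdQ : dQ ∘ₗ dQ = 0) (hf : f ∘ₗ dP = dQ ∘ₗ f)
    (hinj : ∀ x, dP x = 0 → f x ∈ LinearMap.range dQ → x ∈ LinearMap.range dP)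
    (hsurj : ∀ y, dQ y = 0 → ∃ x, dP x = 0 ∧ y - f x ∈ LinearMap.range dQ)
    {y : Q} (hy : IsCycleMod t dQ y) :
    ∃ x, IsCycleMod t dP x ∧ IsBoundaryMod t dQ (y - f x) := by
  obtain ⟨q, hq⟩ := hy
  obtain ⟨p, hp, u, hu⟩ := hsurj q (d_eq_zero_of_d_eq_smul htQ hdQ hq)
  have hf' : ∀ x, f (dP x) = dQ (f x) := LinearMap.congr_fun hf
  obtain ⟨a, ha⟩ : t • p ∈ LinearMap.range dP := by
    refine hinj _ (by rw [map_smul, hp, smul_zero]) ⟨y - t • u, ?_⟩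
    rw [map_smul, map_sub, map_smul, hq, hu, smul_sub]; abel
  obtain ⟨x₁, hx₁, u₁, hu₁⟩ : ∃ x₁, dP x₁ = 0 ∧ y - f a - t • u - f x₁ ∈ LinearMap.range dQ := by
    refine hsurj _ ?_
    rw [map_sub, map_sub, hq, ← hf', ha, map_smul, map_smul, hu, smul_sub]; abel
  exact ⟨a + x₁, ⟨p, by rw [map_add, hx₁, add_zero, ha]⟩, u₁, u, by rw [map_add, hu₁]; abel⟩

end ChainMap

open PowerSeries

/-- Over `R = ℤ/2[[t]]`, let `P`, `Q` be `R`-modules on which multiplication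
by `t` is injective, with `R`-linear differentials `d_P² = 0`, `d_Q² = 0`, and let
`f : P → Q` be an `R`-linear chain map inducing an isomorphism `ker d_P/im d_P ≅
ker d_Q/im d_Q`.  Then the induced map on `P/tP → Q/tQ` induces an isomorphism on the
homology of the induced differentials (stated element-wise: a cycle mod `t` whose image is a
boundary mod `t` is a boundary mod `t`, and every cycle mod `t` in `Q` agrees, modulo
boundaries and `t`, with the image of a cycle mod `t` in `P`). -/
theorem stmt4 {P Q : Type*} [AddCommGroup P] [AddCommGroup Q]
    [Module (PowerSeries (ZMod 2)) P] [Module (PowerSeries (ZMod 2)) Q]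
    (htP : Function.Injective fun x : P => (X : PowerSeries (ZMod 2)) • x)
    (htQ : Function.Injective fun y : Q => (X : PowerSeries (ZMod 2)) • y)
    (dP : P →ₗ[PowerSeries (ZMod 2)] P) (dQ : Q →ₗ[PowerSeries (ZMod 2)] Q)
    (hdP : dP ∘ₗ dP = 0) (hdQ : dQ ∘ₗ dQ = 0)
    (f : P →ₗ[PowerSeries (ZMod 2)] Q) (hf : f ∘ₗ dP = dQ ∘ₗ f)
    (hinj : ∀ x, dP x = 0 → f x ∈ LinearMap.range dQ → x ∈ LinearMap.range dP)
    (hsurj : ∀ y, dQ y = 0 → ∃ x, dP x = 0 ∧ y - f x ∈ LinearMap.range dQ) :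
    (∀ x : P, (∃ p, dP x = (X : PowerSeries (ZMod 2)) • p) →
        (∃ u v, f x = dQ u + (X : PowerSeries (ZMod 2)) • v) →
        ∃ w z, x = dP w + (X : PowerSeries (ZMod 2)) • z) ∧
    (∀ y : Q, (∃ q, dQ y = (X : PowerSeries (ZMod 2)) • q) →
        ∃ x : P, (∃ p, dP x = (X : PowerSeries (ZMod 2)) • p) ∧
          ∃ u v, y - f x = dQ u + (X : PowerSeries (ZMod 2)) • v) :=
  ⟨fun _ hx hfx => isBoundaryMod_of_isBoundaryMod_map htP htQ hdP hdQ hf hinj hsurj hx hfx,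
    fun _ hy => exists_isCycleMod_isBoundaryMod_sub_map htQ hdQ hf hinj hsurj hy⟩
end

section
/- Let M be a finite direct sum, as an encoded right A_∞-module over A, of copies of the trivial one-dimensional module Z₂ (all operators zero) and of modules R_k with parameters k ≥ 2, and let N be a finite direct sum of copies of the trivial one-dimensional module and of modules L_k with parameters k ≥ 2. Then for every n ≥ 1, the cohomology of the truncated reduced bar complex (M ⊗_A N)_n has Z₂-dimension at least (dim_{Z₂} M)·(dim_{Z₂} N). If moreover every parameter k occurring among the summands of M and of N is at least 3, and n ≥ 2, then the dimension of the cohomology is at least 2·(dim_{Z₂} M)·(dim_{Z₂} N). -/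
/-! Write `M = T ⊕ C ⊕ E`, where `T` is spanned by the trivial summands and `C`, `E` by the
generators `r⁰`, `r¹` of the summands `R_k`, and similarly `N = T' ⊕ C' ⊕ E'`. Every operator `m_p`
kills `T ⊕ E` and maps `C` into `E`; it vanishes for `p < t` once all parameters exceed `t`. So
the components `S_p = m_p ⊗ 1 + 1 ⊗ n_p` of the differential vanish for `p < t`, and modulo
`E ⊗ E'` they only see the `T ⊗ C' + C ⊗ T' + C ⊗ C'`-component of their input. Consequently the
differential, which only reads the last `n - t` summands and only writes into the first `n - t`,
has rank at most `(n - t) (rs' + sr' + 2ss') ≤ (n - t) dim M dim N / 2`. The relation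
`∑_{a+c=k} S_a S_c = 0` (the cross terms cancel in characteristic 2) makes it square to zero,
so the cohomology has dimension `n dim M dim N - 2 rank ≥ t dim M dim N`. -/

/-- The underlying space of a direct sum of `r` copies of the trivial one-dimensional module
`ℤ/2` and two-dimensional modules `R_{k_1}, …, R_{k_s}` (resp. `L_{k_1}, …, L_{k_s}`). -/
abbrev SumModel (r s : ℕ) : Type :=
  (Fin r → ZMod 2) × (Fin s → ZMod 2 × ZMod 2)

open Finset LinearMap Module TensorProduct

lemma Fin.card_filter_le_val (n t : ℕ) : #{i : Fin n | t ≤ (i : ℕ)} = n - t := by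
  rw [card_filter, Fin.sum_univ_eq_sum_range (fun i => if t ≤ i then 1 else 0), ← card_filter,
    show (range n).filter (t ≤ ·) = Ico t n by ext; simp; omega, Nat.card_Ico]

lemma Fin.card_filter_val_add_lt (n t : ℕ) : #{i : Fin n | (i : ℕ) + t < n} = n - t := by
  rw [card_filter, Fin.sum_univ_eq_sum_range (fun i => if i + t < n then 1 else 0), ← card_filter,
    show (range n).filter (· + t < n) = range (n - t) by ext; simp; omega, card_range]

lemma Fin.sum_ite_Icc_eq_sum_antidiagonal {M : Type*} [AddCommMonoid M] {n j k : ℕ}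
    (hjk : j ≤ k) (hk : k < n) (F : ℕ → ℕ → M) :
    ∑ i : Fin n, (if j ≤ (i : ℕ) ∧ (i : ℕ) ≤ k then F (i - j) (k - i) else 0) =
      ∑ x ∈ antidiagonal (k - j), F x.1 x.2 := by
  rw [Fin.sum_univ_eq_sum_range (fun i => if j ≤ i ∧ i ≤ k then F (i - j) (k - i) else 0),
    ← sum_filter,
    show (range n).filter (fun i => j ≤ i ∧ i ≤ k) = Ico j (k + 1) by ext; simp; omega,
    sum_Ico_eq_sum_range, Nat.sum_antidiagonal_eq_sum_range_succ_mk,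
    show k + 1 - j = (k - j).succ by omega]
  exact sum_congr rfl fun l _ => by congr 1 <;> omega

section LinearAlgebra

variable {K V : Type*} [Field K] [AddCommGroup V] [Module K V] [FiniteDimensional K V]

lemma Submodule.finrank_pi_ite_le {ι : Type*} [Fintype ι] (p : ι → Prop) [DecidablePred p]
    (Y : Submodule K V) :
    finrank K (Submodule.pi Set.univ fun i => if p i then Y else ⊥) ≤ #{i | p i} * finrank K Y := by
  let W : ι → Submodule K V := fun i => if p i then Y else ⊥
  have hle : Submodule.pi Set.univ W ≤ range (LinearMap.piMap fun i => (W i).subtype) :=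
    fun x hx => ⟨fun i => ⟨x i, hx i trivial⟩, rfl⟩
  calc finrank K (Submodule.pi Set.univ W)
      ≤ ∑ i, finrank K (W i) :=
        (Submodule.finrank_mono hle).trans ((finrank_range_le _).trans (finrank_pi_fintype K).le)
    _ = #{i | p i} * finrank K Y := by
        rw [sum_congr rfl fun i _ => apply_ite (fun U : Submodule K V => finrank K U) (p i) Y ⊥,
          sum_ite, finrank_bot, sum_const_zero, add_zero, sum_const, smul_eq_mul]

theorem LinearMap.finrank_range_add_le {W : Type*} [AddCommGroup W] [Module K W]
    (f g : W →ₗ[K] V) : finrank K (range (f + g)) ≤ finrank K (range f) + finrank K (range g) :=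
  (Submodule.finrank_mono (range_add_le f g)).trans
    (Submodule.finrank_add_le_finrank_add_finrank _ _)

theorem LinearMap.finrank_range_comp_le {W W' : Type*} [AddCommGroup W] [Module K W]
    [AddCommGroup W'] [Module K W'] (f : V →ₗ[K] W') (g : W →ₗ[K] V) :
    finrank K (range (f ∘ₗ g)) ≤ finrank K V :=
  (Submodule.finrank_mono (range_comp_le_range g f)).trans (finrank_range_le f)

theorem TensorProduct.finrank_range_map_le {W : Type*} [AddCommGroup W] [Module K W]
    [FiniteDimensional K W] (f : V →ₗ[K] V) (g : W →ₗ[K] W) :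
    finrank K (range (map f g)) ≤ finrank K (range f) * finrank K (range g) := by
  have hfac : map f g =
      map (range f).subtype (range g).subtype ∘ₗ map f.rangeRestrict g.rangeRestrict := by
    rw [← map_comp]; rfl
  rw [hfac, ← finrank_tensorProduct]
  exact (Submodule.finrank_mono (range_comp_le_range _ _)).trans (finrank_range_le _)

end LinearAlgebra

section BarDifferential

variable {R V : Type*} [Semiring R] [AddCommMonoid V] [Module R V] {n : ℕ}
  (S : ℕ → V →ₗ[R] V) (D : (Fin n → V) →ₗ[R] (Fin n → V))

theorem barDiff_comp_self
    (hD : ∀ b j, D b j = ∑ i : Fin n, if (j : ℕ) ≤ i then S (i - j) (b i) else 0)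
    (hS : ∀ k, ∑ x ∈ antidiagonal k, S x.1 ∘ₗ S x.2 = 0) :
    D ∘ₗ D = 0 := by
  refine LinearMap.ext fun b => funext fun j => ?_
  have hrow : ∀ i : Fin n, (if (j : ℕ) ≤ i then S (i - j) (D b i) else 0) =
      ∑ k : Fin n, if (j : ℕ) ≤ i ∧ (i : ℕ) ≤ k then (S (i - j) ∘ₗ S (k - i)) (b k) else 0 := by
    intro i
    by_cases hji : (j : ℕ) ≤ i
    · simp only [hji, if_true, true_and, hD, map_sum, apply_ite (S _), map_zero, comp_apply]
    · simp [hji]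
  calc D (D b) j
      = ∑ k : Fin n, ∑ i : Fin n,
          if (j : ℕ) ≤ i ∧ (i : ℕ) ≤ k then (S (i - j) ∘ₗ S (k - i)) (b k) else 0 := by
        rw [hD, sum_congr rfl fun i _ => hrow i, sum_comm]
    _ = ∑ k : Fin n,
          if (j : ℕ) ≤ k then (∑ x ∈ antidiagonal ((k : ℕ) - j), S x.1 ∘ₗ S x.2) (b k) else 0 := by
        refine sum_congr rfl fun k _ => ?_
        split_ifs with hjk
        · rw [LinearMap.sum_apply]
          exact Fin.sum_ite_Icc_eq_sum_antidiagonal hjk k.isLt fun a c => (S a ∘ₗ S c) (b k)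
        · exact sum_eq_zero fun i _ => if_neg (by omega)
    _ = 0 := by simp only [hS, LinearMap.zero_apply, ite_self, sum_const_zero]

end BarDifferential

section TruncatedRank

variable {K V : Type*} [Field K] [AddCommGroup V] [Module K V] [FiniteDimensional K V] {n : ℕ}
  (S : ℕ → V →ₗ[K] V) (D : (Fin n → V) →ₗ[K] (Fin n → V))

theorem finrank_range_barDiff_le
    (hD : ∀ b j, D b j = ∑ i : Fin n, if (j : ℕ) ≤ i then S (i - j) (b i) else 0)
    {t : ℕ} (hS : ∀ p < t, S p = 0) (P : V →ₗ[K] V) (Y : Submodule K V)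
    (hPY : ∀ p v, S p (v - P v) ∈ Y) :
    finrank K (range D) ≤ (n - t) * (finrank K (range P) + finrank K Y) := by
  -- `D` only reads the components of index `≥ t` and only writes those of index `< n - t`.
  let Ptr : (Fin n → V) →ₗ[K] (Fin n → V) :=
    LinearMap.pi fun i => if t ≤ (i : ℕ) then P ∘ₗ proj i else 0
  let Ytr : Submodule K (Fin n → V) :=
    Submodule.pi Set.univ fun j => if (j : ℕ) + t < n then Y else ⊥
  have hPtr :
      range Ptr ≤ Submodule.pi Set.univ fun i : Fin n => if t ≤ (i : ℕ) then range P else ⊥ := by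
    rintro _ ⟨b, rfl⟩ i -
    by_cases hi : t ≤ (i : ℕ) <;> simp [Ptr, hi]
  have hrest : ∀ b, D (b - Ptr b) ∈ Ytr := by
    intro b j _
    have hterm : ∀ i : Fin n, (j : ℕ) ≤ i → (i : ℕ) < j + t → S (i - j) ((b - Ptr b) i) = 0 :=
      fun i hji hit => by rw [hS _ (by omega), LinearMap.zero_apply]
    change D (b - Ptr b) j ∈ (if (j : ℕ) + t < n then Y else ⊥)
    rw [hD]
    split_ifs with hj
    · refine Submodule.sum_mem _ fun i _ => ?_
      split_ifs with hji
      · by_cases hti : t ≤ (i : ℕ)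
        · simpa [Ptr, hti] using hPY (i - j) (b i)
        · rw [hterm i hji (by omega)]; exact Y.zero_mem
      · exact Y.zero_mem
    · refine (Submodule.mem_bot K).2 (sum_eq_zero fun i _ => ?_)
      split_ifs with hji
      · exact hterm i hji (by omega)
      · rfl
  have hsplit : range D ≤ range (D ∘ₗ Ptr) ⊔ Ytr := by
    rintro _ ⟨b, rfl⟩
    rw [show D b = D (Ptr b) + D (b - Ptr b) by rw [map_sub, add_sub_cancel]]
    exact Submodule.add_mem_sup ⟨b, rfl⟩ (hrest b)
  calc finrank K (range D)
      ≤ finrank K (range (D ∘ₗ Ptr)) + finrank K Ytr :=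
        (Submodule.finrank_mono hsplit).trans (Submodule.finrank_add_le_finrank_add_finrank _ _)
    _ ≤ finrank K (range Ptr) + finrank K Ytr := by
        rw [range_comp]; gcongr; exact Submodule.finrank_map_le _ _
    _ ≤ (n - t) * finrank K (range P) + (n - t) * finrank K Y := by
        gcongr
        · exact (Submodule.finrank_mono hPtr).trans
            ((Submodule.finrank_pi_ite_le _ _).trans_eq (by rw [Fin.card_filter_le_val]))
        · exact (Submodule.finrank_pi_ite_le _ _).trans_eq (by rw [Fin.card_filter_val_add_lt])
    _ = (n - t) * (finrank K (range P) + finrank K Y) := (mul_add _ _ _).symm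

end TruncatedRank

theorem finrank_homology_add_two_mul_finrank_range {K X : Type*} [Field K] [AddCommGroup X]
    [Module K X] [FiniteDimensional K X] (D : X →ₗ[K] X) (hD : D ∘ₗ D = 0) :
    finrank K (ker D ⧸ (range D).comap (ker D).subtype) + 2 * finrank K (range D) =
      finrank K X := by
  have hle : range D ≤ ker D := range_le_ker_iff.2 hD
  rw [← finrank_range_add_finrank_ker D, ← Submodule.finrank_quotient_add_finrank
    ((range D).comap (ker D).subtype), (Submodule.comapSubtypeEquivOfLe hle).finrank_eq]
  ring

theorem le_finrank_homology {K X : Type*} [Field K] [AddCommGroup X] [Module K X]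
    [FiniteDimensional K X] (D : X →ₗ[K] X) (hD : D ∘ₗ D = 0) {n t d : ℕ}
    (hX : finrank K X = n * d) (hrank : 2 * finrank K (range D) ≤ (n - t) * d) (htn : t ≤ n) :
    t * d ≤ finrank K (ker D ⧸ (range D).comap (ker D).subtype) := by
  have h := finrank_homology_add_two_mul_finrank_range D hD
  have hn : n * d = (n - t) * d + t * d := by rw [← add_mul, Nat.sub_add_cancel htn]
  omega

section TensorOp

variable {R M N : Type*} [CommRing R] [AddCommGroup M] [Module R M] [AddCommGroup N] [Module R N]

def tensorOp (m : ℕ → M →ₗ[R] M) (m' : ℕ → N →ₗ[R] N) (p : ℕ) : M ⊗[R] N →ₗ[R] M ⊗[R] N :=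
  map (m p) LinearMap.id + map LinearMap.id (m' p)

theorem sum_antidiagonal_tensorOp_comp [CharP R 2] {m : ℕ → M →ₗ[R] M} {m' : ℕ → N →ₗ[R] N}
    (hm : ∀ k, ∑ x ∈ antidiagonal k, m x.1 ∘ₗ m x.2 = 0)
    (hm' : ∀ k, ∑ x ∈ antidiagonal k, m' x.1 ∘ₗ m' x.2 = 0) (k : ℕ) :
    ∑ x ∈ antidiagonal k, tensorOp m m' x.1 ∘ₗ tensorOp m m' x.2 = 0 := by
  have hcomp : ∀ a c, tensorOp m m' a ∘ₗ tensorOp m m' c =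
      (rTensor N (m a ∘ₗ m c) + lTensor M (m' a ∘ₗ m' c)) +
        (map (m a) (m' c) + map (m c) (m' a)) := by
    intro a c
    simp only [tensorOp, add_comp, comp_add, ← map_comp, comp_id, id_comp, rTensor, lTensor]
    abel
  have hcross : ∑ x ∈ antidiagonal k, (map (m x.1) (m' x.2) + map (m x.2) (m' x.1)) = 0 := by
    have hswap := Nat.sum_antidiagonal_swap (n := k) (f := fun x => map (m x.1) (m' x.2))
    simp only [Prod.fst_swap, Prod.snd_swap] at hswap
    rw [sum_add_distrib, hswap, ← two_smul R, CharTwo.two_eq_zero, zero_smul]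
  have hrT : ∑ x ∈ antidiagonal k, rTensor N (m x.1 ∘ₗ m x.2) = 0 := by
    rw [← coe_rTensorHom, ← map_sum, hm, map_zero]
  have hlT : ∑ x ∈ antidiagonal k, lTensor M (m' x.1 ∘ₗ m' x.2) = 0 := by
    rw [← coe_lTensorHom, ← map_sum, hm', map_zero]
  simp only [hcomp, sum_add_distrib, hrT, hlT, hcross, add_zero]


structure IsOperatorSplitting (m : ℕ → M →ₗ[R] M) (πT πC πE : M →ₗ[R] M) : Prop where
  add_add_eq_id : πT + πC + πE = LinearMap.id
  comp_T : ∀ p, m p ∘ₗ πT = 0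
  comp_E : ∀ p, m p ∘ₗ πE = 0
  E_comp : ∀ p, πE ∘ₗ m p = m p
  E_idem : πE ∘ₗ πE = πE

namespace IsOperatorSplitting

variable {m : ℕ → M →ₗ[R] M} {m' : ℕ → N →ₗ[R] N} {πT πC πE : M →ₗ[R] M}
  {πT' πC' πE' : N →ₗ[R] N}

theorem comp_eq_zero (h : IsOperatorSplitting m πT πC πE) (a c : ℕ) : m a ∘ₗ m c = 0 := by
  rw [← h.E_comp c, ← comp_assoc, h.comp_E, zero_comp]

theorem sum_antidiagonal_comp (h : IsOperatorSplitting m πT πC πE) (k : ℕ) :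
    ∑ x ∈ antidiagonal k, m x.1 ∘ₗ m x.2 = 0 :=
  sum_eq_zero fun x _ => h.comp_eq_zero x.1 x.2

theorem tensorOp_comp_sub (hM : IsOperatorSplitting m πT πC πE)
    (hN : IsOperatorSplitting m' πT' πC' πE') (p : ℕ) :
    tensorOp m m' p ∘ₗ (LinearMap.id - (map πT πC' + map πC πT' + map πC πC')) =
      map πE πE' ∘ₗ (map (m p ∘ₗ πC) πE' + map πE (m' p ∘ₗ πC')) := by
  have hid : (LinearMap.id : M ⊗[R] N →ₗ[R] M ⊗[R] N) =
      map (πT + πC + πE) (πT' + πC' + πE') := by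
    rw [hM.add_add_eq_id, hN.add_add_eq_id, map_id]
  rw [hid]
  simp only [tensorOp, map_add_left, map_add_right, comp_add, add_comp, comp_sub, ← map_comp,
    id_comp, hM.comp_T, hM.comp_E, hN.comp_T, hN.comp_E, ← comp_assoc, hM.E_comp, hN.E_comp,
    hN.E_idem, hM.E_idem, map_zero_left, map_zero_right]
  abel

end IsOperatorSplitting

end TensorOp

theorem IsOperatorSplitting.finrank_range_barDiff_le {K M N : Type*} [Field K] [AddCommGroup M]
    [Module K M] [AddCommGroup N] [Module K N] [FiniteDimensional K M] [FiniteDimensional K N]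
    {m : ℕ → M →ₗ[K] M} {m' : ℕ → N →ₗ[K] N} {πT πC πE : M →ₗ[K] M} {πT' πC' πE' : N →ₗ[K] N}
    (hM : IsOperatorSplitting m πT πC πE) (hN : IsOperatorSplitting m' πT' πC' πE') {n t : ℕ}
    (D : (Fin n → M ⊗[K] N) →ₗ[K] (Fin n → M ⊗[K] N))
    (hD : ∀ b j, D b j = ∑ i : Fin n, if (j : ℕ) ≤ i then tensorOp m m' (i - j) (b i) else 0)
    (hS : ∀ p < t, tensorOp m m' p = 0) :
    finrank K (range D) ≤ (n - t) *
      (finrank K (range πT) * finrank K (range πC') + finrank K (range πC) * finrank K (range πT')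
        + finrank K (range πC) * finrank K (range πC')
        + finrank K (range πE) * finrank K (range πE')) := by
  refine (_root_.finrank_range_barDiff_le _ D hD hS (map πT πC' + map πC πT' + map πC πC')
    (range (map πE πE')) fun p v => ?_).trans ?_
  · have h := LinearMap.congr_fun (hM.tensorOp_comp_sub hN p) v
    rw [comp_apply, LinearMap.sub_apply, LinearMap.id_apply] at h
    rw [h, comp_apply]
    exact mem_range_self _ _
  · gcongr
    · refine (finrank_range_add_le _ _).trans (add_le_add ((finrank_range_add_le _ _).trans
        (add_le_add (finrank_range_map_le _ _) (finrank_range_map_le _ _))) ?_)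
      exact finrank_range_map_le _ _
    · exact finrank_range_map_le _ _

namespace SumModel

variable (r s : ℕ)

theorem finrank_eq : finrank (ZMod 2) (SumModel r s) = r + 2 * s := by
  simp [finrank_prod, finrank_pi_fintype, mul_comm]

def projT : SumModel r s →ₗ[ZMod 2] SumModel r s := inl _ _ _ ∘ₗ fst _ _ _

def projC : SumModel r s →ₗ[ZMod 2] SumModel r s :=
  (inr _ _ _ ∘ₗ LinearMap.pi fun j => inl _ _ _ ∘ₗ proj j) ∘ₗ
    LinearMap.pi fun j => fst _ _ _ ∘ₗ proj j ∘ₗ snd _ _ _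

def projE : SumModel r s →ₗ[ZMod 2] SumModel r s :=
  (inr _ _ _ ∘ₗ LinearMap.pi fun j => inr _ _ _ ∘ₗ proj j) ∘ₗ
    LinearMap.pi fun j => snd _ _ _ ∘ₗ proj j ∘ₗ snd _ _ _

@[simp] theorem projT_apply (x : SumModel r s) : projT r s x = (x.1, 0) := rfl
@[simp] theorem projC_apply (x : SumModel r s) : projC r s x = (0, fun j => ((x.2 j).1, 0)) := rfl
@[simp] theorem projE_apply (x : SumModel r s) : projE r s x = (0, fun j => (0, (x.2 j).2)) := rfl

theorem finrank_range_projT_le : finrank (ZMod 2) (range (projT r s)) ≤ r :=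
  (LinearMap.finrank_range_comp_le _ _).trans_eq (by simp)

theorem finrank_range_projC_le : finrank (ZMod 2) (range (projC r s)) ≤ s :=
  (LinearMap.finrank_range_comp_le _ _).trans_eq (by simp)

theorem finrank_range_projE_le : finrank (ZMod 2) (range (projE r s)) ≤ s :=
  (LinearMap.finrank_range_comp_le _ _).trans_eq (by simp)

variable {r s} {ks : Fin s → ℕ} {m : ℕ → SumModel r s →ₗ[ZMod 2] SumModel r s}

theorem isOperatorSplitting
    (hm : ∀ i x, m i x = (0, fun j => if i + 1 = ks j then ((0 : ZMod 2), (x.2 j).1) else 0)) :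
    IsOperatorSplitting m (projT r s) (projC r s) (projE r s) where
  add_add_eq_id := LinearMap.ext fun x => Prod.ext (by simp) (funext fun j => by simp)
  comp_T p := LinearMap.ext fun x => Prod.ext (by simp [hm]) (funext fun j => by simp [hm])
  comp_E p := LinearMap.ext fun x => Prod.ext (by simp [hm]) (funext fun j => by simp [hm])
  E_comp p := LinearMap.ext fun x => Prod.ext (by simp [hm])
    (funext fun j => by simp only [comp_apply, projE_apply, hm]; split_ifs <;> rfl)
  E_idem := LinearMap.ext fun x => Prod.ext (by simp) (funext fun j => by simp)

theorem eq_zero_of_lt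
    (hm : ∀ i x, m i x = (0, fun j => if i + 1 = ks j then ((0 : ZMod 2), (x.2 j).1) else 0))
    {p : ℕ} (hp : ∀ j, p + 1 < ks j) : m p = 0 := by
  refine LinearMap.ext fun x => ?_
  rw [hm, LinearMap.zero_apply]
  exact Prod.ext rfl (funext fun j => if_neg (hp j).ne)

theorem two_mul_finrank_range_barDiff_le {r' s' n t : ℕ} {ks' : Fin s' → ℕ}
    {m' : ℕ → SumModel r' s' →ₗ[ZMod 2] SumModel r' s'}
    (hm : ∀ i x, m i x = (0, fun j => if i + 1 = ks j then ((0 : ZMod 2), (x.2 j).1) else 0))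
    (hm' : ∀ i x, m' i x = (0, fun j => if i + 1 = ks' j then ((0 : ZMod 2), (x.2 j).1) else 0))
    (D : (Fin n → SumModel r s ⊗[ZMod 2] SumModel r' s') →ₗ[ZMod 2]
      (Fin n → SumModel r s ⊗[ZMod 2] SumModel r' s'))
    (hD : ∀ b j, D b j = ∑ i : Fin n, if (j : ℕ) ≤ i then tensorOp m m' (i - j) (b i) else 0)
    (hkt : ∀ j, t < ks j) (hkt' : ∀ j, t < ks' j) :
    2 * finrank (ZMod 2) (range D) ≤
      (n - t) * (finrank (ZMod 2) (SumModel r s) * finrank (ZMod 2) (SumModel r' s')) := by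
  have hS : ∀ p < t, tensorOp m m' p = 0 := fun p hp => by
    rw [tensorOp, eq_zero_of_lt hm fun j => by have := hkt j; omega,
      eq_zero_of_lt hm' fun j => by have := hkt' j; omega, map_zero_left, map_zero_right,
      add_zero]
  have hrank := (isOperatorSplitting hm).finrank_range_barDiff_le
    (isOperatorSplitting hm') D hD hS
  calc 2 * finrank (ZMod 2) (range D)
      ≤ 2 * ((n - t) * (r * s' + s * r' + s * s' + s * s')) := by
        have hT := finrank_range_projT_le r s
        have hC := finrank_range_projC_le r s
        have hE := finrank_range_projE_le r s
        have hT' := finrank_range_projT_le r' s'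
        have hC' := finrank_range_projC_le r' s'
        have hE' := finrank_range_projE_le r' s'
        refine Nat.mul_le_mul_left 2 (hrank.trans (Nat.mul_le_mul_left _ ?_))
        exact add_le_add (add_le_add (add_le_add (Nat.mul_le_mul hT hC') (Nat.mul_le_mul hC hT'))
          (Nat.mul_le_mul hC hC')) (Nat.mul_le_mul hE hE')
    _ ≤ (n - t) * ((r + 2 * s) * (r' + 2 * s')) := by
        rw [mul_left_comm]
        exact Nat.mul_le_mul_left _ (by nlinarith)
    _ = _ := by rw [finrank_eq, finrank_eq]

end SumModel

set_option maxSynthPendingDepth 3 in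
/-- Let `M` be a finite direct sum of copies of the trivial module and of
right modules `R_k` with `k ≥ 2`, and `N` a finite direct sum of copies of the trivial module
and of left modules `L_k` with `k ≥ 2` (over `A = ℤ/2[ε]/(ε²)`, encoded by their operator
sequences).  Then for every `n ≥ 1` the cohomology of the truncated reduced bar complex
`(M ⊗_A N)_n` has dimension at least `dim M · dim N`; if all parameters `k` are at least `3`
and `n ≥ 2`, it has dimension at least `2 · dim M · dim N`. -/
theorem stmt8 (r s : ℕ) (ks : Fin s → ℕ) (hks : ∀ j, 2 ≤ ks j)
    (r' s' : ℕ) (ks' : Fin s' → ℕ) (hks' : ∀ j, 2 ≤ ks' j)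
    (mOp : ℕ → SumModel r s →ₗ[ZMod 2] SumModel r s)
    (hmOp : ∀ i x, mOp i x =
      (0, fun j => if i + 1 = ks j then ((0 : ZMod 2), (x.2 j).1) else 0))
    (nOp : ℕ → SumModel r' s' →ₗ[ZMod 2] SumModel r' s')
    (hnOp : ∀ i x, nOp i x =
      (0, fun j => if i + 1 = ks' j then ((0 : ZMod 2), (x.2 j).1) else 0))
    (n : ℕ) (hn : 1 ≤ n)
    (D : (Fin n → TensorProduct (ZMod 2) (SumModel r s) (SumModel r' s')) →ₗ[ZMod 2]
        (Fin n → TensorProduct (ZMod 2) (SumModel r s) (SumModel r' s')))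
    (hD : ∀ (b : Fin n → TensorProduct (ZMod 2) (SumModel r s) (SumModel r' s'))
        (j : Fin n),
      D b j = ∑ i : Fin n, if (j : ℕ) ≤ (i : ℕ) then
        TensorProduct.map (mOp ((i : ℕ) - (j : ℕ))) LinearMap.id (b i)
          + TensorProduct.map LinearMap.id (nOp ((i : ℕ) - (j : ℕ))) (b i) else 0) :
    Module.finrank (ZMod 2) (SumModel r s) * Module.finrank (ZMod 2) (SumModel r' s') ≤
      Module.finrank (ZMod 2)
        (LinearMap.ker D ⧸ (LinearMap.range D).comap (LinearMap.ker D).subtype) ∧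
    ((∀ j, 3 ≤ ks j) → (∀ j, 3 ≤ ks' j) → 2 ≤ n →
      2 * (Module.finrank (ZMod 2) (SumModel r s) *
          Module.finrank (ZMod 2) (SumModel r' s')) ≤
        Module.finrank (ZMod 2)
          (LinearMap.ker D ⧸ (LinearMap.range D).comap (LinearMap.ker D).subtype)) := by
  have hD' : ∀ b j, D b j =
      ∑ i : Fin n, if (j : ℕ) ≤ i then tensorOp mOp nOp (i - j) (b i) else 0 := hD
  have hDD : D ∘ₗ D = 0 := barDiff_comp_self _ D hD' <| sum_antidiagonal_tensorOp_comp
    (SumModel.isOperatorSplitting hmOp).sum_antidiagonal_comp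
    (SumModel.isOperatorSplitting hnOp).sum_antidiagonal_comp
  have hdim : finrank (ZMod 2) (Fin n → SumModel r s ⊗[ZMod 2] SumModel r' s') =
      n * (finrank (ZMod 2) (SumModel r s) * finrank (ZMod 2) (SumModel r' s')) := by
    rw [finrank_pi_fintype, sum_const, card_univ, Fintype.card_fin, smul_eq_mul,
      finrank_tensorProduct]
  have key : ∀ t ≤ n, (∀ j, t < ks j) → (∀ j, t < ks' j) →
      t * (finrank (ZMod 2) (SumModel r s) * finrank (ZMod 2) (SumModel r' s')) ≤
        finrank (ZMod 2) (ker D ⧸ (range D).comap (ker D).subtype) := fun t htn hkt hkt' =>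
    le_finrank_homology D hDD hdim
      (SumModel.two_mul_finrank_range_barDiff_le hmOp hnOp D hD' hkt hkt') htn
  exact ⟨by simpa using key 1 hn hks hks', fun h3 h3' hn2 => key 2 hn2 h3 h3'⟩
end

section
/- Let m ⊆ ℂ[x,y] be the ideal generated by x and y, let f ∈ m⁴ (the fourth power of m), let β ∈ ℂ, and set g = f + β·x². Then the Jacobian ideal J = ⟨∂g/∂x, ∂g/∂y⟩ is contained in the ideal ⟨x, y³⟩, and consequently the quotient ℂ[x,y]/J has ℂ-vector-space dimension (rank) at least 3. -/
/-! Differentiation lowers the order of vanishing at the origin by one, so the partials of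
`f ∈ m⁴` lie in `m³ ⊆ ⟨x, y³⟩`, while the partials of `β x²` are multiples of `x`. Reading off
the coefficients of `1, y, y²`, which vanish on `⟨x, y³⟩`, maps `ℂ[x,y]/J` onto `ℂ³`. -/

open MvPolynomial

theorem Derivation.map_mem_pow_of_mem_pow_succ {R A : Type*} [CommRing R] [CommRing A] [Algebra R A]
    (D : Derivation R A A) (I : Ideal A) (n : ℕ) {a : A} (ha : a ∈ I ^ (n + 1)) :
    D a ∈ I ^ n := by
  induction n generalizing a with
  | zero => simp
  | succ n ih =>
    rw [pow_succ] at ha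
    refine Submodule.mul_induction_on ha (fun b hb c hc => ?_)
      (fun b c hb hc => by rw [map_add]; exact Ideal.add_mem _ hb hc)
    rw [Derivation.leibniz, smul_eq_mul, smul_eq_mul]
    refine Ideal.add_mem _ (Ideal.mul_mem_right _ _ hb) ?_
    rw [pow_succ]
    exact Ideal.mul_mem_mul_rev (ih hb) hc

theorem Ideal.span_pair_pow_le {R : Type*} [CommRing R] (a b : R) (n : ℕ) :
    Ideal.span {a, b} ^ n ≤ Ideal.span {a, b ^ n} := by
  induction n with
  | zero =>
    rw [pow_zero, pow_zero, Ideal.one_eq_top, top_le_iff]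
    exact Ideal.eq_top_of_isUnit_mem _ (Ideal.subset_span (by simp)) isUnit_one
  | succ n ih =>
    rw [pow_succ]
    refine (Ideal.mul_mono_left ih).trans (Ideal.mul_le.2 fun r hr s hs => ?_)
    obtain ⟨p, q, rfl⟩ := Ideal.mem_span_pair.1 hr
    obtain ⟨p', q', rfl⟩ := Ideal.mem_span_pair.1 hs
    exact Ideal.mem_span_pair.2 ⟨p * p' * a + p * q' * b + q * b ^ n * p', q * q', by ring⟩

section Coefficients

variable {σ R : Type*} [CommRing R]

theorem MvPolynomial.coeff_single_eq_zero_of_mem_span_X_X_pow {i j : σ} (hij : i ≠ j)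
    {n k : ℕ} (hk : k < n) {p : MvPolynomial σ R} (hp : p ∈ Ideal.span {X i, X j ^ n}) :
    coeff (Finsupp.single j k) p = 0 := by
  classical
  obtain ⟨u, v, rfl⟩ := Ideal.mem_span_pair.1 hp
  rw [coeff_add, X_pow_eq_monomial, coeff_mul_X', coeff_mul_monomial']
  simp [hij, Finsupp.single_le_iff, hk.not_ge]

noncomputable def MvPolynomial.coeffsXPow (j : σ) (n : ℕ) :
    MvPolynomial σ R →ₗ[R] (Fin n → R) :=
  LinearMap.pi fun k => lcoeff R (Finsupp.single j (k : ℕ))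

@[simp]
theorem MvPolynomial.coeffsXPow_apply (j : σ) (n : ℕ) (p : MvPolynomial σ R) (k : Fin n) :
    coeffsXPow j n p k = coeff (Finsupp.single j (k : ℕ)) p :=
  rfl

theorem MvPolynomial.coeffsXPow_surjective (j : σ) (n : ℕ) :
    Function.Surjective (coeffsXPow (R := R) j n) := by
  classical
  intro w
  refine ⟨∑ k : Fin n, monomial (Finsupp.single j (k : ℕ)) (w k), ?_⟩
  ext k
  simp only [coeffsXPow_apply, coeff_sum, coeff_monomial, (Finsupp.single_injective j).eq_iff,
    Fin.val_inj, Finset.sum_ite_eq', Finset.mem_univ, if_true]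

theorem MvPolynomial.le_rank_quotient_of_le_span_X_X_pow [Nontrivial R] {i j : σ} (hij : i ≠ j)
    {n : ℕ} {I : Ideal (MvPolynomial σ R)} (hI : I ≤ Ideal.span {X i, X j ^ n}) :
    n ≤ Module.rank R (MvPolynomial σ R ⧸ I) := by
  have hker : I.restrictScalars R ≤ LinearMap.ker (coeffsXPow j n) := fun p hp => by
    ext k
    exact coeff_single_eq_zero_of_mem_span_X_X_pow hij k.2 (hI hp)
  have hrank := (Submodule.liftQ _ _ hker).lift_rank_le_of_surjective
    fun w => by
      obtain ⟨p, rfl⟩ := coeffsXPow_surjective j n w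
      exact ⟨Submodule.Quotient.mk p, rfl⟩
  rw [rank_fin_fun, (Submodule.Quotient.restrictScalarsEquiv R I).rank_eq] at hrank
  simpa using hrank

end Coefficients

/-- Let `m = ⟨x, y⟩ ⊆ ℂ[x,y]`, `f ∈ m⁴`, `β ∈ ℂ`, and
`g = f + β x²`.  Then the Jacobian ideal `J = ⟨∂g/∂x, ∂g/∂y⟩` is contained in `⟨x, y³⟩`,
and consequently `ℂ[x,y]/J` has `ℂ`-dimension (rank) at least `3`. -/
theorem stmt12 (f g : MvPolynomial (Fin 2) ℂ) (β : ℂ)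
    (hf : f ∈ (Ideal.span {X 0, X 1} : Ideal (MvPolynomial (Fin 2) ℂ)) ^ 4)
    (hg : g = f + C β * X 0 ^ 2)
    (J : Ideal (MvPolynomial (Fin 2) ℂ))
    (hJ : J = Ideal.span {pderiv 0 g, pderiv 1 g}) :
    J ≤ Ideal.span {X 0, X 1 ^ 3} ∧
      3 ≤ Module.rank ℂ (MvPolynomial (Fin 2) ℂ ⧸ J) := by
  have hderiv (i : Fin 2) : pderiv i g ∈ Ideal.span {X 0, X 1 ^ 3} := by
    have hquad : pderiv i (C β * X 0 ^ 2) = 2 * C β * pderiv i (X 0) * X 0 := by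
      rw [Derivation.leibniz, Derivation.leibniz_pow, pderiv_C, smul_zero, add_zero]
      simp only [nsmul_eq_mul, smul_eq_mul]
      ring
    rw [hg, map_add, hquad]
    exact Ideal.add_mem _
      (Ideal.span_pair_pow_le _ _ 3 ((pderiv i).map_mem_pow_of_mem_pow_succ _ 3 hf))
      (Ideal.mul_mem_left _ _ (Ideal.subset_span (Set.mem_insert _ _)))
  have hJle : J ≤ Ideal.span {X 0, X 1 ^ 3} := by
    rw [hJ, Ideal.span_le, Set.pair_subset_iff]
    exact ⟨hderiv 0, hderiv 1⟩
  exact ⟨hJle, le_rank_quotient_of_le_span_X_X_pow (by decide) hJle⟩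
end
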